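/- For t ∈ ℚ \ {0}, let E_t be the elliptic curve y² = x³ − 7t·x² + 96t²·x + 256t³, with discriminant Δ(E_t) = −121634816·t⁶ ≠ 0. Then for every prime p ∉ {2, 3, 29} with ν_p(t) = 0 such that t is a nonzero square modulo p (i.e. the Legendre symbol (t/p) = 1), p is a prime of good reduction of E_t and |Ẽ_{t,p}(𝔽_p)| ≡ 0 (mod 5). -/

import Mathlib

/-!
STATEMENT 4: For `t ∈ ℚ \ {0}`, let `E_t : y² = x³ − 7t·x² + 96t²·x + 256t³`, with discriminant
`Δ(E_t) = −121634816·t⁶ ≠ 0`.  Then for every prime `p ∉ {2, 3, 29}` with `ν_p(t) = 0` such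
that `t` is a nonzero square modulo `p` (Legendre symbol `(t/p) = 1`), `p` is a prime of good
reduction of `E_t` and `|Ẽ_{t,p}(𝔽_p)| ≡ 0 (mod 5)`.

Under `ν_p(t) = 0` the coefficients of `E_t` are `p`-integral, so the reduction `Ẽ_{t,p}` of
`E_t` mod `p` is the Weierstrass curve over `𝔽_p = ZMod p` with coefficients the images (under
`Rat.cast`) of those of `E_t`; good reduction means this reduction is nonsingular, i.e. has
nonzero discriminant.  "`t` is a nonzero square mod `p`" is formalized as the existence of a
nonzero square root ofellcast `t` in `ZMod p`.  `|Ẽ_{t,p}(𝔽_p)|` counts the point at infinity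
together with the affine solutions of the Weierstrass equation.
-/

open WeierstrassCurve

lemma castIntDiv {p : ℕ} [Fact p.Prime] {a b : ℤ} (q : ℚ) (hq : q = (a : ℚ) / (b : ℚ))
    (hb : ((b : ZMod p) ≠ 0)) :
    (q : ZMod p) = (a : ZMod p) / (b : ZMod p) := by
  have hbz : b ≠ 0 := by rintro rfl; simp at hb
  have hb0 : (b : ℚ) ≠ 0 := Int.cast_ne_zero.2 hbz
  have hdvd : ((q.den : ℤ)) ∣ b := by
    have := Rat.den_dvd a b
    rwa [Rat.divInt_eq_div, ← hq] at this
  have hden : ((q.den : ℤ) : ZMod p) ≠ 0 := by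
    intro h
    exact hb ((ZMod.intCast_zmod_eq_zero_iff_dvd b p).2
      (dvd_trans ((ZMod.intCast_zmod_eq_zero_iff_dvd _ p).1 h) hdvd))
  have hden0 : (q.den : ℚ) ≠ 0 := Nat.cast_ne_zero.2 q.den_nz
  have h1 : (q.num : ℚ) = q * q.den := (div_eq_iff hden0).1 (Rat.num_div_den q)
  have hnum : (q.num : ℚ) * b = a * q.den := by
    rw [h1, hq, mul_right_comm, div_mul_cancel₀ _ hb0]
  have hZ : q.num * b = a * (q.den : ℤ) := by exact_mod_cast hnum
  have hM : (q.num : ZMod p) * (b : ZMod p) = (a : ZMod p) * ((q.den : ℤ) : ZMod p) := by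
    exact_mod_cast congrArg (fun x : ℤ => (x : ZMod p)) hZ
  have hdenN : ((q.den : ℕ) : ZMod p) ≠ 0 := by exact_mod_cast hden
  rw [Rat.cast_def, div_eq_div_iff hdenN hb]
  exact_mod_cast hM

lemma someEq {F : Type*} [Field F] {W : WeierstrassCurve.Affine F} {x₁ y₁ x₂ y₂ : F}
    (h₁ : W.Nonsingular x₁ y₁) (h₂ : W.Nonsingular x₂ y₂) (hx : x₁ = x₂) (hy : y₁ = y₂) :
    (WeierstrassCurve.Affine.Point.some _ _ h₁ : W.Point)
      = WeierstrassCurve.Affine.Point.some _ _ h₂ := by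
  subst hx hy; rfl


/-- The number of points of a Weierstrass curve over a ring: the point at infinity together
with the affine points satisfying the Weierstrass equation. -/
noncomputable def ptCount {R : Type*} [CommRing R] (W : WeierstrassCurve R) : ℕ :=
  1 + Nat.card {P : R × R // W.toAffine.Equation P.1 P.2}

/-- The elliptic curve `E_t : y² = x³ − 7t·x² + 96t²·x + 256t³` over `ℚ`. -/
def Et (t : ℚ) : WeierstrassCurve ℚ :=
  ⟨0, -(7 * t), 0, 96 * t ^ 2, 256 * t ^ 3⟩

/-- The naive reduction mod `p` of a Weierstrass curve over `ℚ` (coefficientwise cast of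
rationals to `ZMod p`); this is the reduction of the curve when its coefficients are
`p`-integral. -/
noncomputable def ratRed (E : WeierstrassCurve ℚ) (p : ℕ) [Fact p.Prime] :
    WeierstrassCurve (ZMod p) :=
  ⟨(E.a₁ : ZMod p), (E.a₂ : ZMod p), (E.a₃ : ZMod p), (E.a₄ : ZMod p), (E.a₆ : ZMod p)⟩

theorem stmt_4 (t : ℚ) (ht : t ≠ 0) (p : ℕ) [hp : Fact p.Prime]
    (hp2 : p ≠ 2) (hp3 : p ≠ 3) (hp29 : p ≠ 29)
    (hval : padicValRat p t = 0)
    (hsq : ∃ z : ZMod p, z ≠ 0 ∧ z ^ 2 = (t : ZMod p)) :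
    (Et t).Δ = -121634816 * t ^ 6 ∧ (Et t).Δ ≠ 0 ∧
    (ratRed (Et t) p).Δ ≠ 0 ∧ 5 ∣ ptCount (ratRed (Et t) p) := by
  obtain ⟨z, hz0, hz2⟩ := hsq
  -- basic nonvanishing facts
  have hT : ((t : ℚ) : ZMod p) ≠ 0 := by rw [← hz2]; exact pow_ne_zero 2 hz0
  have hd : ((t.den : ℤ) : ZMod p) ≠ 0 := by
    intro h
    apply hT
    have h' : ((t.den : ℕ) : ZMod p) = 0 := by exact_mod_cast h
    rw [Rat.cast_def, h', div_zero]
  have htt : (t : ZMod p) = (t.num : ZMod p) / ((t.den : ℤ) : ZMod p) :=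
    castIntDiv t (by push_cast; exact (Rat.num_div_den t).symm) hd
  have key : ∀ (c : ℤ) (k : ℕ),
      ((c * t ^ k : ℚ) : ZMod p) = (c : ZMod p) * ((t : ℚ) : ZMod p) ^ k := by
    intro c k
    have hb : (((t.den : ℤ) ^ k : ℤ) : ZMod p) ≠ 0 := by
      push_cast; exact pow_ne_zero _ (by exact_mod_cast hd)
    have hq : (c * t ^ k : ℚ) = ((c * t.num ^ k : ℤ) : ℚ) / (((t.den : ℤ) ^ k : ℤ) : ℚ) := by
      conv_lhs => rw [← Rat.num_div_den t]
      push_cast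
      rw [div_pow, mul_div_assoc]
    rw [castIntDiv _ hq hb, htt]
    push_cast
    rw [div_pow]
    ring
  -- coefficients of the reduced curve
  have ha1 : (ratRed (Et t) p).a₁ = 0 := by
    show ((Et t).a₁ : ZMod p) = 0; simp [Et]
  have ha3 : (ratRed (Et t) p).a₃ = 0 := by
    show ((Et t).a₃ : ZMod p) = 0; simp [Et]
  have ha2 : (ratRed (Et t) p).a₂ = -7 * z ^ 2 := by
    show ((Et t).a₂ : ZMod p) = _
    have h : (Et t).a₂ = ((-7 : ℤ) : ℚ) * t ^ 1 := by show -(7*t) = _; push_cast; ring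
    rw [h, key, ← hz2]; push_cast; ring
  have ha4 : (ratRed (Et t) p).a₄ = 96 * z ^ 4 := by
    show ((Et t).a₄ : ZMod p) = _
    have h : (Et t).a₄ = ((96 : ℤ) : ℚ) * t ^ 2 := by show 96 * t ^ 2 = _; push_cast; ring
    rw [h, key, ← hz2]; push_cast; ring
  have ha6 : (ratRed (Et t) p).a₆ = 256 * z ^ 6 := by
    show ((Et t).a₆ : ZMod p) = _
    have h : (Et t).a₆ = ((256 : ℤ) : ℚ) * t ^ 3 := by show 256 * t ^ 3 = _; push_cast; ring
    rw [h, key, ← hz2]; push_cast; ring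
  -- discriminants
  have hΔ1 : (Et t).Δ = -121634816 * t ^ 6 := by
    simp only [Δ, b₂, b₄, b₆, b₈, Et]; ring
  have hΔ2 : (Et t).Δ ≠ 0 := by
    rw [hΔ1]; exact mul_ne_zero (by norm_num) (pow_ne_zero _ ht)
  have hnatne : ∀ m : ℕ, ¬ p ∣ m → ((m : ℕ) : ZMod p) ≠ 0 := by
    intro m hm h
    exact hm ((ZMod.natCast_eq_zero_iff m p).1 h)
  have hpd2 : ¬ p ∣ 2 := fun h => hp2 ((Nat.prime_dvd_prime_iff_eq hp.1 Nat.prime_two).1 h)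
  have h2 : (2 : ZMod p) ≠ 0 := by
    have := hnatne 2 hpd2; exact_mod_cast this
  have h121 : (121634816 : ZMod p) ≠ 0 := by
    have : ¬ p ∣ 121634816 := by
      intro h
      rw [show (121634816 : ℕ) = 2 ^ 22 * 29 by norm_num] at h
      rcases (Nat.Prime.dvd_mul hp.1).1 h with h' | h'
      · exact hp2 ((Nat.prime_dvd_prime_iff_eq hp.1 Nat.prime_two).1
          (hp.1.dvd_of_dvd_pow h'))
      · exact hp29 ((Nat.prime_dvd_prime_iff_eq hp.1 (by norm_num)).1 h')
    have := hnatne 121634816 this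
    exact_mod_cast this
  have hΔr : (ratRed (Et t) p).Δ = -121634816 * z ^ 12 := by
    simp only [Δ, b₂, b₄, b₆, b₈, ha1, ha2, ha3, ha4, ha6]; ring
  have hΔrne : (ratRed (Et t) p).Δ ≠ 0 := by
    rw [hΔr]
    exact mul_ne_zero (neg_ne_zero.2 h121) (pow_ne_zero _ hz0)
  refine ⟨hΔ1, hΔ2, hΔrne, ?_⟩
  -- powers of two are nonzero
  have h32 : (32 : ZMod p) ≠ 0 := by
    rw [show (32 : ZMod p) = 2 ^ 5 by norm_num]; exact pow_ne_zero _ h2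
  have h128 : (128 : ZMod p) ≠ 0 := by
    rw [show (128 : ZMod p) = 2 ^ 7 by norm_num]; exact pow_ne_zero _ h2
  have hΔa : (ratRed (Et t) p).toAffine.Δ ≠ 0 := hΔrne
  -- the three affine points P, 2P, 4P
  have hE1 : (ratRed (Et t) p).toAffine.Equation 0 (16 * z ^ 3) := by
    simp only [Affine.equation_iff, ha1, ha2, ha3, ha4, ha6]; ring
  have hn1 : (ratRed (Et t) p).toAffine.Nonsingular 0 (16 * z ^ 3) :=
    (Affine.equation_iff_nonsingular_of_Δ_ne_zero (W := _) hΔa).1 hE1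
  have hE2 : (ratRed (Et t) p).toAffine.Equation (16 * z ^ 2) (-(64 * z ^ 3)) := by
    simp only [Affine.equation_iff, ha1, ha2, ha3, ha4, ha6]; ring
  have hn2 : (ratRed (Et t) p).toAffine.Nonsingular (16 * z ^ 2) (-(64 * z ^ 3)) :=
    (Affine.equation_iff_nonsingular_of_Δ_ne_zero (W := _) hΔa).1 hE2
  have hE4 : (ratRed (Et t) p).toAffine.Equation 0 (-(16 * z ^ 3)) := by
    simp only [Affine.equation_iff, ha1, ha2, ha3, ha4, ha6]; ring
  have hn4 : (ratRed (Et t) p).toAffine.Nonsingular 0 (-(16 * z ^ 3)) :=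
    (Affine.equation_iff_nonsingular_of_Δ_ne_zero (W := _) hΔa).1 hE4
  have hnegY : ∀ x y : ZMod p, (ratRed (Et t) p).toAffine.negY x y = -y := by
    intro x y; simp only [Affine.negY, ha1, ha3]; ring
  have hz3 : z ^ 3 ≠ 0 := pow_ne_zero _ hz0
  -- doubling P
  have hyne1 : (16 * z ^ 3 : ZMod p) ≠ (ratRed (Et t) p).toAffine.negY 0 (16 * z ^ 3) := by
    rw [hnegY]
    intro h
    exact mul_ne_zero h32 hz3 (by linear_combination h)
  have hden1 : (16 * z ^ 3 - (ratRed (Et t) p).toAffine.negY 0 (16 * z ^ 3) : ZMod p) ≠ 0 :=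
    sub_ne_zero_of_ne hyne1
  have hslope1 : (ratRed (Et t) p).toAffine.slope 0 0 (16 * z ^ 3) (16 * z ^ 3) = 3 * z := by
    rw [Affine.slope_of_Y_ne rfl hyne1, div_eq_iff hden1, hnegY, ha1, ha2, ha4]; ring
  have hx1 : (ratRed (Et t) p).toAffine.addX 0 0
      ((ratRed (Et t) p).toAffine.slope 0 0 (16 * z ^ 3) (16 * z ^ 3)) = 16 * z ^ 2 := by
    rw [hslope1]; simp only [Affine.addX, ha1, ha2]; ring
  have hy1 : (ratRed (Et t) p).toAffine.addY 0 0 (16 * z ^ 3)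
      ((ratRed (Et t) p).toAffine.slope 0 0 (16 * z ^ 3) (16 * z ^ 3)) = -(64 * z ^ 3) := by
    rw [hslope1]
    simp only [Affine.addY, Affine.negAddY, Affine.addX, Affine.negY, ha1, ha2, ha3]; ring
  have e1 : (Affine.Point.some _ _ hn1 : (ratRed (Et t) p).toAffine.Point)
      + Affine.Point.some _ _ hn1 = Affine.Point.some _ _ hn2 := by
    rw [Affine.Point.add_self_of_Y_ne hyne1]
    exact someEq _ _ hx1 hy1
  -- doubling 2P
  have hyne2 : (-(64 * z ^ 3) : ZMod p)
      ≠ (ratRed (Et t) p).toAffine.negY (16 * z ^ 2) (-(64 * z ^ 3)) := by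
    rw [hnegY]
    intro h
    exact mul_ne_zero h128 hz3 (by linear_combination -h)
  have hden2 : (-(64 * z ^ 3)
      - (ratRed (Et t) p).toAffine.negY (16 * z ^ 2) (-(64 * z ^ 3)) : ZMod p) ≠ 0 :=
    sub_ne_zero_of_ne hyne2
  have hslope2 : (ratRed (Et t) p).toAffine.slope (16 * z ^ 2) (16 * z ^ 2)
      (-(64 * z ^ 3)) (-(64 * z ^ 3)) = -(5 * z) := by
    rw [Affine.slope_of_Y_ne rfl hyne2, div_eq_iff hden2, hnegY, ha1, ha2, ha4]; ring
  have hx2 : (ratRed (Et t) p).toAffine.addX (16 * z ^ 2) (16 * z ^ 2)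
      ((ratRed (Et t) p).toAffine.slope (16 * z ^ 2) (16 * z ^ 2)
        (-(64 * z ^ 3)) (-(64 * z ^ 3))) = 0 := by
    rw [hslope2]; simp only [Affine.addX, ha1, ha2]; ring
  have hy2 : (ratRed (Et t) p).toAffine.addY (16 * z ^ 2) (16 * z ^ 2) (-(64 * z ^ 3))
      ((ratRed (Et t) p).toAffine.slope (16 * z ^ 2) (16 * z ^ 2)
        (-(64 * z ^ 3)) (-(64 * z ^ 3))) = -(16 * z ^ 3) := by
    rw [hslope2]
    simp only [Affine.addY, Affine.negAddY, Affine.addX, Affine.negY, ha1, ha2, ha3]; ring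
  have e2 : (Affine.Point.some _ _ hn2 : (ratRed (Et t) p).toAffine.Point)
      + Affine.Point.some _ _ hn2 = Affine.Point.some _ _ hn4 := by
    rw [Affine.Point.add_self_of_Y_ne hyne2]
    exact someEq _ _ hx2 hy2
  -- 4P + P = 0
  have e3 : (Affine.Point.some _ _ hn4 : (ratRed (Et t) p).toAffine.Point)
      + Affine.Point.some _ _ hn1 = 0 :=
    Affine.Point.add_of_Y_eq rfl (by rw [hnegY])
  -- P has order 5
  have h5P : (5 : ℕ) • (Affine.Point.some _ _ hn1 : (ratRed (Et t) p).toAffine.Point) = 0 := by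
    have h5 : (5 : ℕ) • (Affine.Point.some _ _ hn1 : (ratRed (Et t) p).toAffine.Point)
        = Affine.Point.some _ _ hn1 + Affine.Point.some _ _ hn1
          + (Affine.Point.some _ _ hn1 + Affine.Point.some _ _ hn1) + Affine.Point.some _ _ hn1 := by
      abel
    rw [h5, e1, e2, e3]
  have hne : (Affine.Point.some _ _ hn1 : (ratRed (Et t) p).toAffine.Point) ≠ 0 :=
    Affine.Point.some_ne_zero hn1
  have horder : addOrderOf (Affine.Point.some _ _ hn1 : (ratRed (Et t) p).toAffine.Point) = 5 := by
    have hdvd := addOrderOf_dvd_of_nsmul_eq_zero h5P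
    rcases (Nat.Prime.eq_one_or_self_of_dvd (by norm_num) _ hdvd) with h | h
    · exact absurd (AddMonoid.addOrderOf_eq_one_iff.1 h) hne
    · exact h
  have hdvd5 : 5 ∣ Nat.card (ratRed (Et t) p).toAffine.Point :=
    horder ▸ addOrderOf_dvd_natCard _
  -- identify the point count with the cardinality of the group of points
  have e : (ratRed (Et t) p).toAffine.Point
      ≃ Option {P : ZMod p × ZMod p // (ratRed (Et t) p).toAffine.Equation P.1 P.2} :=
    { toFun := fun P => match P with
        | .zero => none
        | @Affine.Point.some _ _ _ x y h => some ⟨(x, y), h.1⟩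
      invFun := fun o => match o with
        | none => .zero
        | some ⟨(x, y), hE⟩ => .some _ _ ((Affine.equation_iff_nonsingular_of_Δ_ne_zero (W := _) hΔa).1 hE)
      left_inv := by rintro (_ | _) <;> rfl
      right_inv := by rintro (_ | ⟨⟨x, y⟩, hE⟩) <;> rfl }
  have hcard : Nat.card (ratRed (Et t) p).toAffine.Point = ptCount (ratRed (Et t) p) := by
    haveI : Fintype {P : ZMod p × ZMod p // (ratRed (Et t) p).toAffine.Equation P.1 P.2} :=
      Fintype.ofFinite _
    rw [Nat.card_congr e, ptCount, Nat.card_eq_fintype_card, Nat.card_eq_fintype_card,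
      Fintype.card_option]
    exact Nat.add_comm _ _
  exact hcard ▸ hdvd5
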